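/- arXiv:2412.05067 — 2 statements merged into one kernel-verified Lean document; each statement's English description precedes it below -/
import Mathlib

section
/- Any function ρ from GL₂(𝔽₃) to GL₂(ℂ) that is a group homomorphism and sends the matrix with rows (0,1),(1,1) to the diagonal matrix diag(e^{-iπ/4}, -e^{iπ/4}) is injective. -/
open Matrix Complex

/-- The matrix with rows `(0,1),(1,1)` as an element of `GL₂(𝔽₃)`. -/
def m0111' : GL (Fin 2) (ZMod 3) :=
  ⟨!![0, 1; 1, 1], !![2, 1; 1, 0], by decide, by decide⟩

set_option maxRecDepth 100000 in
set_option maxHeartbeats 10000000 in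
lemma key_matrix : ∀ A B : Matrix (Fin 2) (Fin 2) (ZMod 3), A * B = 1 → A ≠ 1 →
    ∃ C D : Matrix (Fin 2) (Fin 2) (ZMod 3), C * D = 1 ∧ ∃ k : Fin 7,
      (C * A * D = (!![0, 1; 1, 1] : Matrix (Fin 2) (Fin 2) (ZMod 3)) ^ (k.1 + 1) ∨
       C * A * D * A = (!![0, 1; 1, 1] : Matrix (Fin 2) (Fin 2) (ZMod 3)) ^ (k.1 + 1)) := by
  decide

lemma diag_pow (a b : ℂ) (n : ℕ) :
    (!![a, 0; 0, b]) ^ n = !![a ^ n, 0; 0, b ^ n] := by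
  induction n with
  | zero => simp [Matrix.one_fin_two]
  | succ n ih => rw [pow_succ, ih, Matrix.mul_fin_two]; simp [pow_succ]

/-- Any group homomorphism `ρ : GL₂(𝔽₃) → GL₂(ℂ)` sending the matrix with rows
`(0,1),(1,1)` to the diagonal matrix `diag(e^{-iπ/4}, -e^{iπ/4})` is injective. -/
theorem hom_sending_m0111_to_diag_injective
    (ρ : GL (Fin 2) (ZMod 3) →* GL (Fin 2) ℂ)
    (h : (ρ m0111' : Matrix (Fin 2) (Fin 2) ℂ) =
      !![Complex.exp (-(Real.pi * I) / 4), 0; 0, -Complex.exp (Real.pi * I / 4)]) :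
    Function.Injective ρ := by
  rw [injective_iff_map_eq_one]
  intro x hx
  by_contra hne
  have hA1 : (x : Matrix (Fin 2) (Fin 2) (ZMod 3)) ≠ 1 := by
    intro hc; exact hne (Units.ext hc)
  obtain ⟨C, D, hCD, k, hk⟩ := key_matrix x.val x.inv x.val_inv hA1
  set g : GL (Fin 2) (ZMod 3) := ⟨C, D, hCD, mul_eq_one_comm.mp hCD⟩ with hg
  have hk' : g * x * g⁻¹ = m0111' ^ (k.1 + 1) ∨ g * x * g⁻¹ * x = m0111' ^ (k.1 + 1) := by
    rcases hk with hk | hk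
    · left; apply Units.ext
      show C * x.val * D = _
      rw [hk]; rfl
    · right; apply Units.ext
      show C * x.val * D * x.val = _
      rw [hk]; rfl
  have h1 : ρ (m0111' ^ (k.1 + 1)) = 1 := by
    rcases hk' with hk' | hk' <;> rw [← hk'] <;>
      simp [_root_.map_mul, _root_.map_inv, hx]
  have h1' : (ρ m0111') ^ (k.1 + 1) = 1 := by rw [← map_pow]; exact h1
  have h2 : ((ρ m0111' : GL (Fin 2) ℂ) : Matrix (Fin 2) (Fin 2) ℂ) ^ (k.1 + 1) = 1 := by
    have h2' := congrArg (fun u : GL (Fin 2) ℂ => (u : Matrix (Fin 2) (Fin 2) ℂ)) h1'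
    simpa [Units.val_pow_eq_pow_val] using h2'
  rw [h, diag_pow] at h2
  have h3 : Complex.exp (-(Real.pi * I) / 4) ^ (k.1 + 1) = 1 := by
    simpa using congrArg (fun M : Matrix (Fin 2) (Fin 2) ℂ => M 0 0) h2
  rw [← Complex.exp_nat_mul, Complex.exp_eq_one_iff] at h3
  obtain ⟨m, hm⟩ := h3
  have hπ : (Real.pi : ℂ) ≠ 0 := by exact_mod_cast Real.pi_ne_zero
  have hm2 : ((k.1 : ℂ) + 1) * ((Real.pi : ℂ) * I) = (-8 * m) * ((Real.pi : ℂ) * I) := by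
    push_cast at hm ⊢
    linear_combination (-4 : ℂ) * hm
  have hm3 : ((k.1 : ℂ) + 1) = -8 * m :=
    mul_right_cancel₀ (mul_ne_zero hπ Complex.I_ne_zero) hm2
  have hm4 : (k.1 : ℤ) + 1 = -8 * m := by exact_mod_cast hm3
  have hk7 : k.1 < 7 := k.2
  omega
end

section
/- The polynomial x⁸ + 72 is irreducible over ℚ, and its splitting field over ℚ has degree 16. -/
/-!
Let `α` be a root of `x⁸ + 72` in `ℂ` and `s = α⁴ / (6i)`, so that `s² = 2` and `α⁴ = 6is`.
The roots are the `αζᵏ` with `ζ = (1 + i) / s` a primitive 8th root of unity, so the splitting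
field is `ℚ(α, i) = ℚ(i, s, α², α)`. Each of the four steps adjoins a square root of an element
of the previous field, and each has degree 2: writing elements of a quadratic extension
`K(x)` as `p + qx`, one finds that `2` is not a square in `ℚ(i)`, that `6is` is not a square in
`ℚ(i, s)` (it would make `-2` a square in `ℚ(i)`), and that `α ∈ ℚ(i, s, α²)` would make `-α⁴`,
hence `6is`, a square in `ℚ(i, s)`. So the splitting field has degree 16, and as adjoining `i` to
`ℚ(α)` has degree at most 2, `[ℚ(α) : ℚ] = 8`: `x⁸ + 72` is the minimal polynomial of `α`.
-/

open Polynomial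

namespace IntermediateField

variable {F E : Type*} [Field F] [Field E] [Algebra F E]

theorem adjoin_insert_eq_restrictScalars (S : Set E) (x : E) :
    adjoin F (insert x S) = (adjoin (adjoin F S) {x}).restrictScalars F := by
  rw [adjoin_adjoin_left, Set.union_singleton]

theorem isIntegral_of_sq_mem {K : IntermediateField F E} {x : E} (hx : x ^ 2 ∈ K) :
    IsIntegral K x :=
  ⟨X ^ 2 - C ⟨x ^ 2, hx⟩, monic_X_pow_sub_C _ two_ne_zero, by simp⟩

theorem natDegree_minpoly_le_two_of_sq_mem {K : IntermediateField F E} {x : E}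
    (hx : x ^ 2 ∈ K) : (minpoly K x).natDegree ≤ 2 := by
  have hdvd : minpoly K x ∣ X ^ 2 - C ⟨x ^ 2, hx⟩ := minpoly.dvd _ _ (by simp)
  simpa using natDegree_le_of_dvd hdvd (X_pow_sub_C_ne_zero two_pos _)

theorem finrank_adjoin_insert_eq_mul (S : Set E) (x : E) :
    Module.finrank F (adjoin F (insert x S)) =
      Module.finrank F (adjoin F S) * Module.finrank (adjoin F S) (adjoin (adjoin F S) {x}) := by
  rw [adjoin_insert_eq_restrictScalars, Module.finrank_mul_finrank]
  rfl

theorem finrank_adjoin_insert_le {S : Set E} {x : E} (hx : x ^ 2 ∈ adjoin F S) :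
    Module.finrank F (adjoin F (insert x S)) ≤ 2 * Module.finrank F (adjoin F S) := by
  rw [finrank_adjoin_insert_eq_mul, mul_comm, adjoin.finrank (isIntegral_of_sq_mem hx)]
  exact Nat.mul_le_mul_right _ (natDegree_minpoly_le_two_of_sq_mem hx)

theorem finrank_adjoin_insert {S : Set E} {x : E} (hx2 : x ^ 2 ∈ adjoin F S)
    (hx : x ∉ adjoin F S) :
    Module.finrank F (adjoin F (insert x S)) = 2 * Module.finrank F (adjoin F S) := by
  have hint := isIntegral_of_sq_mem hx2
  rw [finrank_adjoin_insert_eq_mul, mul_comm, adjoin.finrank hint]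
  congr
  refine le_antisymm (natDegree_minpoly_le_two_of_sq_mem hx2)
    ((minpoly.two_le_natDegree_iff hint).2 ?_)
  rintro ⟨y, rfl⟩
  exact hx y.2

theorem exists_eq_add_mul_of_mem_adjoin_insert {S : Set E} {x y : E}
    (hx : x ^ 2 ∈ adjoin F S) (hy : y ∈ adjoin F (insert x S)) :
    ∃ p ∈ adjoin F S, ∃ q ∈ adjoin F S, y = p + q * x := by
  rw [adjoin_insert_eq_restrictScalars, mem_restrictScalars, ← mem_toSubalgebra,
    adjoin_simple_toSubalgebra_of_isAlgebraic (isIntegral_of_sq_mem hx).isAlgebraic] at hy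
  induction hy using Algebra.adjoin_induction with
  | mem z hz => exact ⟨0, zero_mem _, 1, one_mem _, by simp [Set.mem_singleton_iff.mp hz]⟩
  | algebraMap r => exact ⟨r, r.2, 0, zero_mem _, by simp⟩
  | add a b _ _ iha ihb =>
    obtain ⟨p, hp, q, hq, rfl⟩ := iha
    obtain ⟨p', hp', q', hq', rfl⟩ := ihb
    exact ⟨p + p', add_mem hp hp', q + q', add_mem hq hq', by ring⟩
  | mul a b _ _ iha ihb =>
    obtain ⟨p, hp, q, hq, rfl⟩ := iha
    obtain ⟨p', hp', q', hq', rfl⟩ := ihb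
    exact ⟨p * p' + q * q' * x ^ 2, add_mem (mul_mem hp hp') (mul_mem (mul_mem hq hq') hx),
      p * q' + q * p', add_mem (mul_mem hp hq') (mul_mem hq hp'), by ring⟩

theorem eq_and_eq_of_add_mul_eq_add_mul {K : IntermediateField F E} {x p q p' q' : E}
    (hx : x ∉ K) (hp : p ∈ K) (hq : q ∈ K) (hp' : p' ∈ K) (hq' : q' ∈ K)
    (h : p + q * x = p' + q' * x) : p = p' ∧ q = q' := by
  obtain rfl : q = q' := by
    by_contra hne
    refine hx ?_
    have hx_eq : x = (p' - p) / (q - q') := by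
      rw [eq_div_iff (sub_ne_zero.2 hne)]
      linear_combination h
    rw [hx_eq]
    exact div_mem (sub_mem hp' hp) (sub_mem hq hq')
  exact ⟨add_right_cancel h, rfl⟩

theorem exists_of_sq_eq_add_mul {S : Set E} {x y a b : E} (hx2 : x ^ 2 ∈ adjoin F S)
    (hx : x ∉ adjoin F S) (hy : y ∈ adjoin F (insert x S)) (ha : a ∈ adjoin F S)
    (hb : b ∈ adjoin F S) (h : y ^ 2 = a + b * x) :
    ∃ p ∈ adjoin F S, ∃ q ∈ adjoin F S, p ^ 2 + x ^ 2 * q ^ 2 = a ∧ 2 * p * q = b := by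
  obtain ⟨p, hp, q, hq, rfl⟩ := exists_eq_add_mul_of_mem_adjoin_insert hx2 hy
  refine ⟨p, hp, q, hq, eq_and_eq_of_add_mul_eq_add_mul hx ?_ ?_ ha hb ?_⟩
  · exact add_mem (pow_mem hp 2) (mul_mem hx2 (pow_mem hq 2))
  · exact mul_mem (mul_mem (ofNat_mem _ 2) hp) hq
  · linear_combination h

end IntermediateField

theorem IsPrimitiveRoot.of_pow_four_eq_neg_one {R : Type*} [CommRing R] {ζ : R}
    (h : ζ ^ 4 = -1) (hR : (-1 : R) ≠ 1) : IsPrimitiveRoot ζ 8 := by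
  rw [IsPrimitiveRoot.iff_orderOf]
  refine orderOf_eq_prime_pow (p := 2) (n := 2) (by rwa [show 2 ^ 2 = 4 from rfl, h]) ?_
  rw [show 2 ^ (2 + 1) = 4 * 2 from rfl, pow_mul, h, neg_one_sq]

open IntermediateField

theorem Polynomial.finrank_splittingField_eq_finrank_adjoin_rootSet {K L : Type*} [Field K]
    [Field L] [Algebra K L] {p : K[X]} (hp : (p.map (algebraMap K L)).Splits) :
    Module.finrank K p.SplittingField = Module.finrank K (adjoin K (p.rootSet L)) :=
  haveI := adjoin_rootSet_isSplittingField hp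
  (IsSplittingField.algEquiv _ p).toLinearEquiv.finrank_eq.symm

theorem Polynomial.irreducible_of_natDegree_le_natDegree_minpoly {K L : Type*} [Field K]
    [Field L] [Algebra K L] {p : K[X]} {x : L} (hp : p.Monic) (hx : aeval x p = 0)
    (hdeg : p.natDegree ≤ (minpoly K x).natDegree) : Irreducible p := by
  have hint : IsIntegral K x := ⟨p, hp, hx⟩
  rw [eq_of_monic_of_dvd_of_natDegree_le (minpoly.monic hint) hp (minpoly.dvd K x hx) hdeg]
  exact minpoly.irreducible hint

theorem monic_X_pow_eight_add_72 : (X ^ 8 + 72 : ℚ[X]).Monic := by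
  rw [← map_ofNat C 72]
  exact monic_X_pow_add_C _ (by norm_num)

theorem natDegree_X_pow_eight_add_72 : (X ^ 8 + 72 : ℚ[X]).natDegree = 8 := by
  rw [← map_ofNat C 72, natDegree_X_pow_add_C]

theorem mem_rootSet_X_pow_eight_add_72 {z : ℂ} :
    z ∈ (X ^ 8 + 72 : ℚ[X]).rootSet ℂ ↔ z ^ 8 = -72 := by
  rw [mem_rootSet_of_ne monic_X_pow_eight_add_72.ne_zero]
  simp [eq_neg_iff_add_eq_zero, map_ofNat]

namespace Complex

theorem I_notMem_bot : I ∉ (⊥ : IntermediateField ℚ ℂ) := by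
  rw [mem_bot]
  rintro ⟨r, hr⟩
  simpa using congrArg im hr

theorem sq_ne_two_of_mem_adjoin_I {y : ℂ} (hy : y ∈ adjoin ℚ {I}) : y ^ 2 ≠ 2 := by
  intro h
  obtain ⟨p, hp, q, hq, hsum, hprod⟩ := exists_of_sq_eq_add_mul (S := ∅) (x := I) (b := 0)
    (by simp) (by simpa using I_notMem_bot) (by simpa using hy) (ofNat_mem _ 2) (zero_mem _)
    (by simpa using h)
  rw [adjoin_empty, mem_bot] at hp hq
  obtain ⟨p, rfl⟩ := hp
  obtain ⟨q, rfl⟩ := hq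
  simp only [eq_ratCast, I_sq] at hsum hprod
  have hsum' : p ^ 2 - q ^ 2 = 2 := by
    exact_mod_cast (by linear_combination hsum : (p : ℂ) ^ 2 - q ^ 2 = 2)
  have hprod' : p * q = 0 := by
    exact_mod_cast (by linear_combination hprod / 2 : (p : ℂ) * q = 0)
  rcases mul_eq_zero.1 hprod' with rfl | rfl
  · nlinarith
  · have hsquare : IsSquare (2 : ℚ) := ⟨p, by rw [← hsum']; ring⟩
    rw [Rat.isSquare_iff] at hsquare
    norm_num at hsquare

section Tower

variable {α s : ℂ}

theorem sq_ne_six_mul_I_mul_of_mem_adjoin (hs : s ^ 2 = 2) {y : ℂ}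
    (hy : y ∈ adjoin ℚ {s, I}) : y ^ 2 ≠ 6 * I * s := by
  intro h
  have hI : I ∈ adjoin ℚ {I} := mem_adjoin_simple_self ℚ I
  obtain ⟨p, hp, q, hq, hsum, hprod⟩ := exists_of_sq_eq_add_mul
    (by rw [hs]; exact ofNat_mem _ 2) (fun hmem ↦ sq_ne_two_of_mem_adjoin_I hmem hs) hy
    (zero_mem _) (mul_mem (ofNat_mem _ 6) hI) (by rw [h]; ring)
  have hq0 : q ≠ 0 := by
    rintro rfl
    simp at hprod
  refine sq_ne_two_of_mem_adjoin_I (mul_mem hI (div_mem hp hq)) ?_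
  field_simp
  linear_combination -hsum + q ^ 2 * hs + p ^ 2 * I_sq

theorem sq_notMem_adjoin (hs : s ^ 2 = 2) (hα : α ^ 4 = 6 * I * s) :
    α ^ 2 ∉ adjoin ℚ {s, I} := fun hmem ↦
  sq_ne_six_mul_I_mul_of_mem_adjoin hs hmem (by rw [← hα]; ring)

theorem pow_four_mem_adjoin (hα : α ^ 4 = 6 * I * s) : (α ^ 2) ^ 2 ∈ adjoin ℚ {s, I} := by
  rw [← pow_mul, hα]
  exact mul_mem (mul_mem (ofNat_mem _ 6) (subset_adjoin _ _ (by simp)))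
    (subset_adjoin _ _ (by simp))

theorem notMem_adjoin_sq (hs : s ^ 2 = 2) (hα : α ^ 4 = 6 * I * s) :
    α ∉ adjoin ℚ {α ^ 2, s, I} := by
  intro hmem
  have hI : I ∈ adjoin ℚ {s, I} := subset_adjoin _ _ (by simp)
  obtain ⟨p, hp, q, hq, hsum, hprod⟩ := exists_of_sq_eq_add_mul (pow_four_mem_adjoin hα)
    (sq_notMem_adjoin hs hα) hmem (zero_mem _) (one_mem _) (by ring)
  have hq0 : q ≠ 0 := by
    rintro rfl
    simp at hprod
  refine sq_ne_six_mul_I_mul_of_mem_adjoin hs (mul_mem hI (div_mem hp hq)) ?_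
  rw [← hα]
  field_simp
  linear_combination -hsum + p ^ 2 * I_sq

theorem finrank_adjoin_tower (hs : s ^ 2 = 2) (hα : α ^ 4 = 6 * I * s) :
    Module.finrank ℚ (adjoin ℚ {α, α ^ 2, s, I}) = 16 := by
  have h1 : Module.finrank ℚ (adjoin ℚ {I}) = 2 := by
    have h := finrank_adjoin_insert (F := ℚ) (S := ∅) (x := I)
      (by rw [adjoin_empty, I_sq]; exact neg_mem (one_mem _))
      (by rw [adjoin_empty]; exact I_notMem_bot)
    rwa [LawfulSingleton.insert_empty_eq, adjoin_empty, IntermediateField.finrank_bot] at h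
  have h2 : Module.finrank ℚ (adjoin ℚ {s, I}) = 4 := by
    rw [finrank_adjoin_insert (by rw [hs]; exact ofNat_mem _ 2)
      (fun hmem ↦ sq_ne_two_of_mem_adjoin_I hmem hs), h1]
  have h3 : Module.finrank ℚ (adjoin ℚ {α ^ 2, s, I}) = 8 := by
    rw [finrank_adjoin_insert (pow_four_mem_adjoin hα) (sq_notMem_adjoin hs hα), h2]
  rw [finrank_adjoin_insert (subset_adjoin _ _ (by simp)) (notMem_adjoin_sq hs hα), h3]

theorem mem_adjoin_of_pow_four_eq (hα : α ^ 4 = 6 * I * s) : s ∈ adjoin ℚ {α, I} := by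
  rw [show s = α ^ 4 / (6 * I) by rw [hα]; field_simp]
  exact div_mem (pow_mem (subset_adjoin _ _ (by simp)) 4)
    (mul_mem (ofNat_mem _ 6) (subset_adjoin _ _ (by simp)))

theorem adjoin_tower_eq (hα : α ^ 4 = 6 * I * s) :
    adjoin ℚ {α, α ^ 2, s, I} = adjoin ℚ {α, I} := by
  refine le_antisymm (adjoin_le_iff.2 ?_) (adjoin.mono _ _ _ (by simp [Set.insert_subset_iff]))
  have hαmem : α ∈ adjoin ℚ {α, I} := subset_adjoin _ _ (by simp)
  simp only [Set.insert_subset_iff, Set.singleton_subset_iff, SetLike.mem_coe]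
  exact ⟨hαmem, pow_mem hαmem 2, mem_adjoin_of_pow_four_eq hα, subset_adjoin _ _ (by simp)⟩

theorem one_add_I_div_sq (hs : s ^ 2 = 2) : ((1 + I) / s) ^ 2 = I := by
  have hs0 : s ≠ 0 := by
    rintro rfl
    norm_num at hs
  field_simp
  linear_combination I_sq - I * hs

theorem isPrimitiveRoot_one_add_I_div (hs : s ^ 2 = 2) : IsPrimitiveRoot ((1 + I) / s) 8 :=
  .of_pow_four_eq_neg_one (by rw [show 4 = 2 * 2 from rfl, pow_mul, one_add_I_div_sq hs, I_sq])
    (by norm_num)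

theorem adjoin_rootSet_X_pow_eight_add_72 (hs : s ^ 2 = 2) (hα : α ^ 4 = 6 * I * s) :
    adjoin ℚ ((X ^ 8 + 72 : ℚ[X]).rootSet ℂ) = adjoin ℚ {α, I} := by
  have hα8 : α ^ 8 = -72 := by
    rw [show α ^ 8 = (α ^ 4) ^ 2 by ring, hα]
    linear_combination (36 * s ^ 2) * I_sq - 36 * hs
  have hα0 : α ≠ 0 := by
    rintro rfl
    norm_num at hα8
  have hζ2 := one_add_I_div_sq hs
  have hζ := isPrimitiveRoot_one_add_I_div hs
  set ζ := (1 + I) / s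
  refine le_antisymm (adjoin_le_iff.2 fun z hz ↦ ?_) (adjoin_le_iff.2 ?_)
  · rw [mem_rootSet_X_pow_eight_add_72] at hz
    obtain ⟨k, -, hk⟩ := hζ.eq_pow_of_pow_eq_one (ξ := z / α) (by rw [div_pow, hz, hα8]; norm_num)
    have hζmem : ζ ∈ adjoin ℚ {α, I} :=
      div_mem (add_mem (one_mem _) (subset_adjoin _ _ (by simp))) (mem_adjoin_of_pow_four_eq hα)
    rw [← div_mul_cancel₀ z hα0, ← hk]
    exact mul_mem (pow_mem hζmem k) (subset_adjoin _ _ (by simp))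
  · have hαR : α ∈ (X ^ 8 + 72 : ℚ[X]).rootSet ℂ := mem_rootSet_X_pow_eight_add_72.2 hα8
    have hαζR : α * ζ ∈ (X ^ 8 + 72 : ℚ[X]).rootSet ℂ := by
      rw [mem_rootSet_X_pow_eight_add_72, mul_pow, hζ.pow_eq_one, mul_one, hα8]
    have hζR : ζ ∈ adjoin ℚ ((X ^ 8 + 72 : ℚ[X]).rootSet ℂ) := by
      rw [← mul_div_cancel_left₀ ζ hα0]
      exact div_mem (subset_adjoin _ _ hαζR) (subset_adjoin _ _ hαR)
    simp only [Set.insert_subset_iff, Set.singleton_subset_iff, SetLike.mem_coe]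
    exact ⟨subset_adjoin _ _ hαR, hζ2 ▸ pow_mem hζR 2⟩

end Tower

end Complex

open Complex

/-- The polynomial `x⁸ + 72` is irreducible over `ℚ`, and its splitting field
over `ℚ` has degree 16. -/
theorem x8_add_72_irreducible_splitting_degree :
    Irreducible (X ^ 8 + 72 : ℚ[X]) ∧
    Module.finrank ℚ (X ^ 8 + 72 : ℚ[X]).SplittingField = 16 := by
  obtain ⟨α, hα8⟩ := IsAlgClosed.exists_pow_nat_eq (-72 : ℂ) (by norm_num : 0 < 8)
  set s := α ^ 4 / (6 * I)
  have hα : α ^ 4 = 6 * I * s := by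
    simp only [s]
    field_simp
  have hs : s ^ 2 = 2 := by
    rw [div_pow, ← pow_mul, hα8, mul_pow, I_sq]
    norm_num
  have hfin : Module.finrank ℚ (adjoin ℚ {α, I}) = 16 :=
    adjoin_tower_eq hα ▸ finrank_adjoin_tower hs hα
  have hroot : aeval α (X ^ 8 + 72 : ℚ[X]) = 0 :=
    (mem_rootSet.1 (mem_rootSet_X_pow_eight_add_72.2 hα8)).2
  refine ⟨irreducible_of_natDegree_le_natDegree_minpoly monic_X_pow_eight_add_72 hroot ?_, ?_⟩
  · have hle := finrank_adjoin_insert_le (F := ℚ) (S := {α}) (x := I)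
      (by rw [I_sq]; exact neg_mem (one_mem _))
    rw [Set.pair_comm, hfin, adjoin.finrank ⟨_, monic_X_pow_eight_add_72, hroot⟩] at hle
    rw [natDegree_X_pow_eight_add_72]
    omega
  · rw [finrank_splittingField_eq_finrank_adjoin_rootSet (L := ℂ) (IsAlgClosed.splits _),
      adjoin_rootSet_X_pow_eight_add_72 hs hα, hfin]
end
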